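/- arXiv:1909.13127 — 6 statements merged into one kernel-verified Lean document; each statement's English description precedes it below -/
import Mathlib

section
/- Matrix Hölder inequality: for symmetric real n×n matrices A and B and real numbers s, t ≥ 1 with 1/s + 1/t = 1, one has Tr(A·B) ≤ (Tr(|A|^s))^{1/s} · (Tr(|B|^t))^{1/t}. -/
/-!
Diagonalize `A = U diag(λ) U⋆` and `B = V diag(μ) V⋆`. Then
`Tr(A B) = ∑ᵢⱼ Wᵢⱼ λᵢ μⱼ` with `Wᵢⱼ = |(U⋆V)ᵢⱼ|²`, and `W` is doubly stochastic because `U⋆V` is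
unitary. Hölder's inequality for the measure `W` on pairs `(i, j)` bounds this sum by
`(∑ᵢⱼ Wᵢⱼ |λᵢ|^s)^(1/s) (∑ᵢⱼ Wᵢⱼ |μⱼ|^t)^(1/t)`, and the row and column sums of `W` collapse the
two factors to `(∑ᵢ |λᵢ|^s)^(1/s) = Tr(|A|^s)^(1/s)` and `Tr(|B|^t)^(1/t)`.
-/

open Matrix

namespace Real

theorem weighted_inner_le_Lp_mul_Lq {ι : Type*} (s : Finset ι) {p q : ℝ}
    (hpq : p.HolderConjugate q) {w : ι → ℝ} (hw : ∀ i ∈ s, 0 ≤ w i) (f g : ι → ℝ) :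
    ∑ i ∈ s, w i * f i * g i ≤
      (∑ i ∈ s, w i * |f i| ^ p) ^ (1 / p) * (∑ i ∈ s, w i * |g i| ^ q) ^ (1 / q) := by
  have split_weight : ∀ i ∈ s, w i * f i * g i = w i ^ (1 / p) * f i * (w i ^ (1 / q) * g i) := by
    intro i hi
    have : w i ^ (1 / p) * w i ^ (1 / q) = w i := by
      rw [← rpow_add_of_nonneg (hw i hi) hpq.one_div_nonneg hpq.symm.one_div_nonneg,
        hpq.one_div_add_one_div, div_one, rpow_one]
    rw [mul_mul_mul_comm, this, mul_assoc]
  have rpow_weight : ∀ {r : ℝ}, 0 < r → ∀ i ∈ s, ∀ x : ℝ,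
      |w i ^ (1 / r) * x| ^ r = w i * |x| ^ r := by
    intro r hr i hi x
    rw [abs_mul, abs_of_nonneg (rpow_nonneg (hw i hi) _), mul_rpow (rpow_nonneg (hw i hi) _)
      (abs_nonneg x), ← rpow_mul (hw i hi), one_div_mul_cancel hr.ne', rpow_one]
  calc ∑ i ∈ s, w i * f i * g i
      = ∑ i ∈ s, w i ^ (1 / p) * f i * (w i ^ (1 / q) * g i) := Finset.sum_congr rfl split_weight
    _ ≤ (∑ i ∈ s, |w i ^ (1 / p) * f i| ^ p) ^ (1 / p) *
          (∑ i ∈ s, |w i ^ (1 / q) * g i| ^ q) ^ (1 / q) := inner_le_Lp_mul_Lq s _ _ hpq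
    _ = (∑ i ∈ s, w i * |f i| ^ p) ^ (1 / p) * (∑ i ∈ s, w i * |g i| ^ q) ^ (1 / q) := by
      rw [Finset.sum_congr rfl fun i hi => rpow_weight hpq.pos i hi (f i),
        Finset.sum_congr rfl fun i hi => rpow_weight hpq.symm.pos i hi (g i)]

end Real

namespace Matrix

variable {n 𝕜 : Type*} [Fintype n] [DecidableEq n] [RCLike 𝕜]

theorem sum_mul_mul_le_Lp_mul_Lq_of_mem_doublyStochastic {M : Matrix n n ℝ}
    (hM : M ∈ doublyStochastic ℝ n) {p q : ℝ} (hpq : p.HolderConjugate q) (x y : n → ℝ) :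
    ∑ i, ∑ j, M i j * x i * y j ≤ (∑ i, |x i| ^ p) ^ (1 / p) * (∑ j, |y j| ^ q) ^ (1 / q) := by
  have row_sums : ∑ ij : n × n, M ij.1 ij.2 * |x ij.1| ^ p = ∑ i, |x i| ^ p := by
    simp only [Fintype.sum_prod_type, ← Finset.sum_mul, sum_row_of_mem_doublyStochastic hM,
      one_mul]
  have col_sums : ∑ ij : n × n, M ij.1 ij.2 * |y ij.2| ^ q = ∑ j, |y j| ^ q := by
    simp only [Fintype.sum_prod_type_right, ← Finset.sum_mul, sum_col_of_mem_doublyStochastic hM,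
      one_mul]
  rw [← row_sums, ← col_sums, ← Fintype.sum_prod_type']
  exact Real.weighted_inner_le_Lp_mul_Lq _ hpq (fun _ _ => nonneg_of_mem_doublyStochastic hM)
    (fun ij : n × n => x ij.1) (fun ij => y ij.2)

theorem of_norm_sq_mem_doublyStochastic {U : Matrix n n 𝕜} (hU : U ∈ unitaryGroup n 𝕜) :
    of (fun i j => ‖U i j‖ ^ 2) ∈ doublyStochastic ℝ n := by
  rw [mem_doublyStochastic_iff_sum]
  refine ⟨fun i j => sq_nonneg ‖U i j‖, fun i => ?_, fun j => ?_⟩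
  · have h := congr_fun₂ (mem_unitaryGroup_iff.mp hU) i i
    simp only [mul_apply, star_apply, RCLike.star_def, RCLike.mul_conj, one_apply_eq] at h
    exact_mod_cast h
  · have h := congr_fun₂ (mem_unitaryGroup_iff'.mp hU) j j
    simp only [mul_apply, star_apply, RCLike.star_def, RCLike.conj_mul, one_apply_eq] at h
    exact_mod_cast h

theorem trace_diagonal_mul_mul_diagonal_mul_conjTranspose (d e : n → ℝ) (W : Matrix n n 𝕜) :
    (diagonal (RCLike.ofReal ∘ d) * W * diagonal (RCLike.ofReal ∘ e) * Wᴴ).trace =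
      ((∑ i, ∑ j, ‖W i j‖ ^ 2 * d i * e j : ℝ) : 𝕜) := by
  simp only [trace, diag, mul_apply, diagonal_apply, conjTranspose_apply, RCLike.star_def,
    ite_mul, zero_mul, mul_ite, mul_zero, Finset.sum_ite_eq, Finset.sum_ite_eq',
    Finset.mem_univ, if_true, RCLike.ofReal_sum, RCLike.ofReal_mul, RCLike.ofReal_pow,
    Function.comp_apply]
  refine Finset.sum_congr rfl fun i _ => Finset.sum_congr rfl fun j _ => ?_
  rw [← RCLike.mul_conj]
  ring

namespace IsHermitian

variable {A B : Matrix n n 𝕜}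

theorem trace_cfc (hA : A.IsHermitian) (f : ℝ → ℝ) :
    (hA.cfc f).trace = ((∑ i, f (hA.eigenvalues i) : ℝ) : 𝕜) := by
  rw [IsHermitian.cfc, Unitary.conjStarAlgAut_apply, trace_mul_cycle, Unitary.coe_star_mul_self,
    one_mul, trace_diagonal, RCLike.ofReal_sum]
  rfl

theorem trace_mul_eq_sum_eigenvalues (hA : A.IsHermitian) (hB : B.IsHermitian) :
    (A * B).trace = ((∑ i, ∑ j,
      ‖(star (hA.eigenvectorUnitary : Matrix n n 𝕜) * hB.eigenvectorUnitary) i j‖ ^ 2 *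
        hA.eigenvalues i * hB.eigenvalues j : ℝ) : 𝕜) := by
  set U : Matrix n n 𝕜 := ↑hA.eigenvectorUnitary
  set V : Matrix n n 𝕜 := ↑hB.eigenvectorUnitary
  have hW : (star U * V)ᴴ = star V * U := by rw [← star_eq_conjTranspose, star_mul, star_star]
  conv_lhs => rw [hA.spectral_theorem, hB.spectral_theorem, Unitary.conjStarAlgAut_apply,
    Unitary.conjStarAlgAut_apply]
  rw [← trace_diagonal_mul_mul_diagonal_mul_conjTranspose, hW]
  simp only [Matrix.mul_assoc]
  rw [trace_mul_comm U]
  simp only [Matrix.mul_assoc]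
  rfl

end IsHermitian

end Matrix

/-- Matrix Hölder inequality: for symmetric real `n×n` matrices `A`, `B` and reals
`s, t ≥ 1` with `1/s + 1/t = 1`, `Tr(A·B) ≤ (Tr(|A|^s))^(1/s) · (Tr(|B|^t))^(1/t)`,
where `|A|^s` is defined via the functional calculus `x ↦ |x|^s` applied to `A`. -/
theorem matrix_holder (n : ℕ) (A B : Matrix (Fin n) (Fin n) ℝ)
    (hA : A.IsHermitian) (hB : B.IsHermitian)
    (s t : ℝ) (hs : 1 ≤ s) (ht : 1 ≤ t) (hst : 1 / s + 1 / t = 1) :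
    (A * B).trace ≤
      ((hA.cfc fun x : ℝ => |x| ^ s).trace) ^ (1 / s) *
      ((hB.cfc fun x : ℝ => |x| ^ t).trace) ^ (1 / t) := by
  have hconj : s.HolderConjugate t :=
    ⟨by rw [inv_one, ← one_div, ← one_div, hst], by linarith, by linarith⟩
  have hW := of_norm_sq_mem_doublyStochastic
    (star hA.eigenvectorUnitary * hB.eigenvectorUnitary).prop
  rw [hA.trace_cfc, hB.trace_cfc, hA.trace_mul_eq_sum_eigenvalues hB]
  exact sum_mul_mul_le_Lp_mul_Lq_of_mem_doublyStochastic hW hconj _ _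
end

section
/- Lieb–Thirring inequality (trace form): for positive semidefinite real n×n matrices A, B and an integer r ≥ 1, Tr((B^{1/2} A B^{1/2})^r) ≤ Tr(B^{r/2} A^r B^{r/2}). -/
/-!
Write `C = T A T` and `D = T^r A^r T^r` with `T = B^{1/2}`, and let `c₁ ≥ c₂ ≥ ⋯` and
`d₁ ≥ d₂ ≥ ⋯` be their eigenvalues. Whenever `XY` is Hermitian, `‖XY‖ ≤ ‖YX‖`, since a nonzero
eigenvalue of `XY` is one of `YX`; this makes `j ↦ ‖P^j T^j‖` log-convex, whence
`‖TAT‖^r ≤ ‖T^r A^r T^r‖` with `P = A^{1/2}`. The `k`-th compound matrix is multiplicative and the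
norm of the compound of a positive semidefinite matrix is the product of its `k` largest
eigenvalues, so the norm inequality for compounds reads `∏_{i ≤ k} c_i^r ≤ ∏_{i ≤ k} d_i` for every
`k`. This weak log-majorization gives `∑ c_i^r ≤ ∑ d_i` by Abel summation against the decreasing
weights `c_i^r`, using `t - u ≤ t (log t - log u)`.
-/

open Finset Matrix
open scoped Matrix.Norms.L2Operator

section Majorization

lemma Real.sub_le_mul_log_sub_log {t u : ℝ} (ht : 0 < t) (hu : 0 < u) :
    t - u ≤ t * (Real.log t - Real.log u) := by
  calc t - u = t * (1 - (t / u)⁻¹) := by field_simp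
    _ ≤ t * Real.log (t / u) :=
        mul_le_mul_of_nonneg_left (Real.one_sub_inv_le_log_of_pos (div_pos ht hu)) ht.le
    _ = t * (Real.log t - Real.log u) := by rw [Real.log_div ht.ne' hu.ne']

namespace Finset

lemma sum_range_mul_nonpos_of_antitone {w d : ℕ → ℝ} {N : ℕ} (hw : Antitone w)
    (hw0 : ∀ i, 0 ≤ w i) (hd : ∀ K ≤ N, ∑ i ∈ range K, d i ≤ 0) :
    ∑ i ∈ range N, w i * d i ≤ 0 := by
  have hparts := sum_range_by_parts w d (n := N)
  simp only [smul_eq_mul] at hparts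
  rw [hparts, sub_nonpos]
  refine (mul_nonpos_of_nonneg_of_nonpos (hw0 _) (hd N le_rfl)).trans (sum_nonneg fun i hi ↦ ?_)
  have hi : i + 1 ≤ N := by have := mem_range.mp hi; omega
  exact mul_nonneg_of_nonpos_of_nonpos (sub_nonpos.mpr (hw (Nat.le_succ i))) (hd _ hi)

lemma prod_le_prod_range_card {a : ℕ → ℝ} (ha : Antitone a) (ha0 : ∀ i, 0 ≤ a i)
    (S : Finset ℕ) : ∏ i ∈ S, a i ≤ ∏ i ∈ range #S, a i := by
  induction S using Finset.induction_on_max with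
  | empty => simp
  | insert m S hlt ih =>
    have hm : m ∉ S := fun h ↦ (hlt m h).false
    have hcard : #S ≤ m := by
      simpa using card_le_card (fun i hi ↦ mem_range.mpr (hlt i hi) : S ⊆ range m)
    rw [prod_insert hm, card_insert_of_notMem hm, prod_range_succ, mul_comm]
    exact mul_le_mul ih (ha hcard) (ha0 m) (prod_nonneg fun i _ ↦ ha0 i)

lemma sum_range_le_of_prod_range_le_of_pos {x y : ℕ → ℝ} {N : ℕ} (hx : Antitone x)
    (hx0 : ∀ i, 0 ≤ x i) (hpos : ∀ i < N, 0 < x i) (hy0 : ∀ i, 0 ≤ y i)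
    (h : ∀ K ≤ N, ∏ i ∈ range K, x i ≤ ∏ i ∈ range K, y i) :
    ∑ i ∈ range N, x i ≤ ∑ i ∈ range N, y i := by
  have hprod_pos : ∀ K ≤ N, 0 < ∏ i ∈ range K, x i := fun K hK ↦
    prod_pos fun i hi ↦ hpos i ((mem_range.mp hi).trans_le hK)
  have hypos : ∀ i < N, 0 < y i := fun i hi ↦ by
    refine (hy0 i).lt_of_ne fun hyi ↦ ?_
    have := (hprod_pos (i + 1) hi).trans_le (h (i + 1) hi)
    rw [prod_range_succ, ← hyi, mul_zero] at this
    exact this.false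
  have hlog : ∀ K ≤ N, ∑ i ∈ range K, (Real.log (x i) - Real.log (y i)) ≤ 0 := fun K hK ↦ by
    rw [sum_sub_distrib, ← Real.log_prod ?_, ← Real.log_prod ?_, sub_nonpos]
    · exact Real.log_le_log (hprod_pos K hK) (h K hK)
    · exact fun i hi ↦ (hypos i ((mem_range.mp hi).trans_le hK)).ne'
    · exact fun i hi ↦ (hpos i ((mem_range.mp hi).trans_le hK)).ne'
  rw [← sub_nonpos, ← sum_sub_distrib]
  calc ∑ i ∈ range N, (x i - y i)
      ≤ ∑ i ∈ range N, x i * (Real.log (x i) - Real.log (y i)) := sum_le_sum fun i hi ↦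
        Real.sub_le_mul_log_sub_log (hpos i (mem_range.mp hi)) (hypos i (mem_range.mp hi))
    _ ≤ 0 := sum_range_mul_nonpos_of_antitone hx hx0 hlog

theorem sum_range_le_of_prod_range_le {x y : ℕ → ℝ} {N : ℕ} (hx : Antitone x)
    (hx0 : ∀ i, 0 ≤ x i) (hy0 : ∀ i, 0 ≤ y i)
    (h : ∀ K ≤ N, ∏ i ∈ range K, x i ≤ ∏ i ∈ range K, y i) :
    ∑ i ∈ range N, x i ≤ ∑ i ∈ range N, y i := by
  induction N with
  | zero => simp
  | succ N ih =>
    rcases (hx0 N).eq_or_lt with hxN | hxN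
    · rw [sum_range_succ, sum_range_succ, ← hxN]
      exact add_le_add (ih fun K hK ↦ h K (hK.trans N.le_succ)) (hy0 N)
    · exact sum_range_le_of_prod_range_le_of_pos hx hx0
        (fun i hi ↦ hxN.trans_le (hx (Nat.lt_succ_iff.mp hi))) hy0 h

end Finset

variable {ι : Type*} [Fintype ι]

lemma exists_equiv_fin_antitone (x : ι → ℝ) :
    ∃ e : ι ≃ Fin (Fintype.card ι), Antitone (x ∘ e.symm) := by
  set f := x ∘ (Fintype.equivFin ι).symm
  refine ⟨(Fintype.equivFin ι).trans (Tuple.sort (OrderDual.toDual ∘ f)).symm, ?_⟩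
  exact monotone_toDual_comp_iff.mp (Tuple.monotone_sort (OrderDual.toDual ∘ f))

/-- `a` is the decreasing rearrangement of `x`, extended by zero. -/
lemma exists_antitone_rearrangement (x : ι → ℝ) (hx : ∀ i, 0 ≤ x i) :
    ∃ a : ℕ → ℝ, Antitone a ∧ (∀ j, 0 ≤ a j) ∧
      ∑ j ∈ range (Fintype.card ι), a j = ∑ i, x i ∧
      (∀ K ≤ Fintype.card ι, ∃ s : Finset ι, #s = K ∧ ∏ j ∈ range K, a j = ∏ i ∈ s, x i) ∧
      ∀ s : Finset ι, ∏ i ∈ s, x i ≤ ∏ j ∈ range #s, a j := by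
  obtain ⟨e, he⟩ := exists_equiv_fin_antitone x
  set a : ℕ → ℝ := fun j ↦ if h : j < Fintype.card ι then x (e.symm ⟨j, h⟩) else 0
  have ha_fin : ∀ j : Fin (Fintype.card ι), a j = x (e.symm j) := fun j ↦ dif_pos j.2
  have ha0 : ∀ j, 0 ≤ a j := fun j ↦ by
    by_cases hj : j < Fintype.card ι
    · simpa [a, hj] using hx _
    · simp [a, hj]
  have ha : Antitone a := fun j j' hjj' ↦ by
    by_cases hj' : j' < Fintype.card ι
    · have hj : j < Fintype.card ι := hjj'.trans_lt hj'
      rw [ha_fin ⟨j, hj⟩, ha_fin ⟨j', hj'⟩]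
      exact he (show (⟨j, hj⟩ : Fin _) ≤ ⟨j', hj'⟩ from hjj')
    · exact (dif_neg hj').trans_le (ha0 j)
  refine ⟨a, ha, ha0, ?_, fun K hK ↦ ?_, fun s ↦ ?_⟩
  · rw [← Fin.sum_univ_eq_sum_range, ← e.symm.sum_comp]
    exact sum_congr rfl fun j _ ↦ ha_fin j
  · refine ⟨univ.map ((Fin.castLEEmb hK).trans e.symm.toEmbedding), by simp, ?_⟩
    rw [← Fin.prod_univ_eq_prod_range, prod_map]
    exact prod_congr rfl fun j _ ↦ ha_fin (Fin.castLE hK j)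
  · set e' : ι ↪ ℕ := e.toEmbedding.trans Fin.valEmbedding
    calc ∏ i ∈ s, x i = ∏ j ∈ s.map e', a j := by
          rw [prod_map]
          exact prod_congr rfl fun i _ ↦ by simp [e', ha_fin]
      _ ≤ ∏ j ∈ range #s, a j := by
          simpa using prod_le_prod_range_card ha ha0 (s.map e')

theorem Finset.sum_le_sum_of_forall_prod_le {x y : ι → ℝ} (hx : ∀ i, 0 ≤ x i)
    (hy : ∀ i, 0 ≤ y i)
    (h : ∀ s : Finset ι, ∃ t : Finset ι, #t = #s ∧ ∏ i ∈ s, x i ≤ ∏ i ∈ t, y i) :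
    ∑ i, x i ≤ ∑ i, y i := by
  obtain ⟨a, ha, ha0, hsum_a, hprefix_a, -⟩ := exists_antitone_rearrangement x hx
  obtain ⟨b, -, hb0, hsum_b, -, hbound_b⟩ := exists_antitone_rearrangement y hy
  rw [← hsum_a, ← hsum_b]
  refine sum_range_le_of_prod_range_le ha ha0 hb0 fun K hK ↦ ?_
  obtain ⟨s, rfl, hs⟩ := hprefix_a K hK
  obtain ⟨t, hts, hst⟩ := h s
  rw [hs, ← hts]
  exact hst.trans (hbound_b t)

end Majorization

lemma pow_le_of_sq_le_mul {v : ℕ → ℝ} (hv : ∀ j, 0 ≤ v j) (h0 : v 0 = 1)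
    (h : ∀ j, v (j + 1) ^ 2 ≤ v j * v (j + 2)) (m : ℕ) : v 1 ^ m ≤ v m := by
  have step : ∀ j, v 1 * v j ≤ v (j + 1) := by
    intro j
    induction j with
    | zero => rw [h0, mul_one]
    | succ j ih =>
      rcases (hv j).eq_or_lt with hj | hj
      · have hsq := h j
        rw [← hj, zero_mul] at hsq
        rw [pow_eq_zero_iff two_ne_zero |>.mp (le_antisymm hsq (sq_nonneg _)), mul_zero]
        exact hv _
      · nlinarith [h j, mul_le_mul_of_nonneg_right ih (hv (j + 1))]
  induction m with
  | zero => rw [pow_zero, h0]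
  | succ m ih =>
    calc v 1 ^ (m + 1) = v 1 * v 1 ^ m := pow_succ' _ _
      _ ≤ v 1 * v m := mul_le_mul_of_nonneg_left ih (hv 1)
      _ ≤ v (m + 1) := step m

namespace Matrix

section Compound

variable {R ι : Type*} [CommRing R] [Fintype ι] [LinearOrder ι]

/-- The `k`-th compound matrix: the matrix of `⋀ᵏ M` in the basis of wedge products of standard
basis vectors, indexed by the `k`-element subsets of `ι`. -/
noncomputable def compound (k : ℕ) :
    Matrix ι ι R →* Matrix (Set.powersetCard ι k) (Set.powersetCard ι k) R where
  toFun M := LinearMap.toMatrix ((Pi.basisFun R ι).exteriorPower k)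
    ((Pi.basisFun R ι).exteriorPower k) (exteriorPower.map k (toLin' M))
  map_one' := by rw [toLin'_one, exteriorPower.map_id, LinearMap.toMatrix_id]
  map_mul' M N := by
    rw [toLin'_mul, exteriorPower.map_comp,
      LinearMap.toMatrix_comp _ ((Pi.basisFun R ι).exteriorPower k)]

variable (k : ℕ)

lemma compound_apply (M : Matrix ι ι R) (s t : Set.powersetCard ι k) :
    compound k M s t = (M.submatrix (Set.powersetCard.ofFinEmbEquiv.symm s)
      (Set.powersetCard.ofFinEmbEquiv.symm t)).det := by
  rw [compound, MonoidHom.coe_mk, OneHom.coe_mk, LinearMap.toMatrix_apply,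
    exteriorPower.basis_apply, exteriorPower.map_apply_ιMulti_family,
    exteriorPower.basis_repr_apply, exteriorPower.ιMulti_family,
    exteriorPower.ιMultiDual_apply_ιMulti, ← det_transpose]
  congr 1
  ext i j
  simp [toLin'_apply, Pi.basisFun_apply]

lemma compound_diagonal (d : ι → R) :
    compound k (diagonal d) =
      diagonal fun s : Set.powersetCard ι k ↦ ∏ a ∈ (s : Finset ι), d a := by
  ext s t
  have hcols : toLin' (diagonal d) ∘ Pi.basisFun R ι = fun i ↦ d i • Pi.basisFun R ι i := by
    ext i j
    simp [Pi.single_apply, eq_comm]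
  have hprod : ∏ i, d (Set.powersetCard.ofFinEmbEquiv.symm t i) = ∏ a ∈ (t : Finset ι), d a := by
    conv_rhs => rw [← map_orderEmbOfFin_univ t.1 t.2, prod_map]
    rfl
  rw [compound, MonoidHom.coe_mk, OneHom.coe_mk, LinearMap.toMatrix_apply,
    exteriorPower.basis_apply, exteriorPower.map_apply_ιMulti_family, hcols,
    exteriorPower.ιMulti_family]
  simp only [Function.comp_def]
  rw [AlternatingMap.map_smul_univ, hprod, map_smul]
  change ((∏ a ∈ (t : Finset ι), d a) • ((Pi.basisFun R ι).exteriorPower k).repr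
    (exteriorPower.ιMulti_family R k (Pi.basisFun R ι) t)) s = _
  rw [exteriorPower.basis_repr, Finsupp.smul_apply, Finsupp.single_apply, diagonal_apply]
  by_cases hst : s = t
  · subst hst; simp
  · rw [if_neg (Ne.symm hst), if_neg hst, smul_zero]

lemma compound_conjTranspose [StarRing R] (M : Matrix ι ι R) :
    compound k Mᴴ = (compound k M)ᴴ := by
  ext s t
  rw [conjTranspose_apply, compound_apply, compound_apply, ← conjTranspose_submatrix,
    det_conjTranspose]

lemma IsHermitian.compound [StarRing R] {M : Matrix ι ι R} (hM : M.IsHermitian) :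
    (compound k M).IsHermitian := by
  rw [IsHermitian, ← compound_conjTranspose, hM.eq]

lemma compound_mem_unitaryGroup [StarRing R] {U : Matrix ι ι R} (hU : U ∈ unitaryGroup ι R) :
    compound k U ∈ unitaryGroup (Set.powersetCard ι k) R := by
  rw [mem_unitaryGroup_iff, star_eq_conjTranspose, ← compound_conjTranspose, ← map_mul,
    ← star_eq_conjTranspose, mem_unitaryGroup_iff.mp hU, map_one]

open scoped MatrixOrder ComplexOrder in
lemma PosSemidef.compound {𝕜 : Type*} [RCLike 𝕜] {A : Matrix ι ι 𝕜} (hA : A.PosSemidef) :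
    (compound k A).PosSemidef := by
  have hA' : A = (CFC.sqrt A)ᴴ * CFC.sqrt A := by
    rw [(CFC.sqrt_nonneg A).posSemidef.isHermitian.eq, CFC.sqrt_mul_sqrt_self A hA.nonneg]
  rw [hA', map_mul, compound_conjTranspose]
  exact posSemidef_conjTranspose_mul_self _

end Compound

section Norm

variable {n : Type*} [Fintype n] [DecidableEq n]

lemma norm_mul_diagonal_mul_star {U : Matrix n n ℝ} (hU : U ∈ unitaryGroup n ℝ) (d : n → ℝ) :
    ‖U * diagonal d * star U‖ = ‖d‖ := by
  rw [CStarRing.norm_mul_mem_unitary _ (Unitary.star_mem hU), CStarRing.norm_mem_unitary_mul _ hU,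
    l2_opNorm_diagonal]

lemma IsHermitian.norm_eq_norm_eigenvalues {A : Matrix n n ℝ} (hA : A.IsHermitian) :
    ‖A‖ = ‖hA.eigenvalues‖ := by
  conv_lhs => rw [hA.spectral_theorem, Unitary.conjStarAlgAut_apply]
  simpa using norm_mul_diagonal_mul_star hA.eigenvectorUnitary.2 _

lemma IsHermitian.trace_pow {A : Matrix n n ℝ} (hA : A.IsHermitian) (m : ℕ) :
    (A ^ m).trace = ∑ i, hA.eigenvalues i ^ m := by
  conv_lhs => rw [hA.spectral_theorem, ← map_pow, Unitary.conjStarAlgAut_apply, trace_mul_cycle,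
    Unitary.coe_star_mul_self, one_mul, diagonal_pow, trace_diagonal]
  simp

lemma norm_mul_le_norm_mul_comm {X Y : Matrix n n ℝ} (h : (X * Y).IsHermitian) :
    ‖X * Y‖ ≤ ‖Y * X‖ := by
  cases isEmpty_or_nonempty n
  · simp [Subsingleton.elim (X * Y) 0]
  obtain ⟨i, hi⟩ := (IsGreatest.pi_norm h.eigenvalues).1
  rw [h.norm_eq_norm_eigenvalues, ← hi]
  by_cases h0 : h.eigenvalues i = 0
  · simp [h0]
  · have hmem : h.eigenvalues i ∈ spectrum ℝ (Y * X) \ {0} := by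
      rw [← spectrum.nonzero_mul_comm]
      exact ⟨h.eigenvalues_mem_spectrum_real i, h0⟩
    exact spectrum.norm_le_norm_of_mem hmem.1

variable {P Q : Matrix n n ℝ}

lemma IsHermitian.norm_pow_mul_pow_sq_le (hP : P.IsHermitian) (hQ : Q.IsHermitian) (j : ℕ) :
    ‖P ^ (j + 1) * Q ^ (j + 1)‖ ^ 2 ≤ ‖P ^ j * Q ^ j‖ * ‖P ^ (j + 2) * Q ^ (j + 2)‖ := by
  have hswap : ∀ i, ‖Q ^ i * P ^ i‖ = ‖P ^ i * Q ^ i‖ := fun i ↦ by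
    rw [← l2_opNorm_conjTranspose, conjTranspose_mul, (hP.pow i).eq, (hQ.pow i).eq]
  have hgram : (P ^ (j + 1) * Q ^ (j + 1))ᴴ * (P ^ (j + 1) * Q ^ (j + 1))
      = Q * (Q ^ j * P ^ (2 * j + 2) * Q ^ (j + 1)) := by
    rw [conjTranspose_mul, (hP.pow _).eq, (hQ.pow _).eq,
      show 2 * j + 2 = (j + 1) + (j + 1) by ring, pow_add P (j + 1) (j + 1), pow_succ' Q j]
    simp only [mul_assoc]
  have hcycled : Q ^ j * P ^ (2 * j + 2) * Q ^ (j + 1) * Q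
      = Q ^ j * P ^ j * (P ^ (j + 2) * Q ^ (j + 2)) := by
    rw [show 2 * j + 2 = j + (j + 2) by ring, pow_add P j (j + 2), pow_succ Q (j + 1)]
    simp only [mul_assoc]
  calc ‖P ^ (j + 1) * Q ^ (j + 1)‖ ^ 2
      = ‖Q * (Q ^ j * P ^ (2 * j + 2) * Q ^ (j + 1))‖ := by
        rw [sq, ← l2_opNorm_conjTranspose_mul_self, hgram]
    _ ≤ ‖Q ^ j * P ^ (2 * j + 2) * Q ^ (j + 1) * Q‖ :=
        norm_mul_le_norm_mul_comm (hgram ▸ isHermitian_conjTranspose_mul_self _)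
    _ ≤ ‖P ^ j * Q ^ j‖ * ‖P ^ (j + 2) * Q ^ (j + 2)‖ := by
        rw [hcycled, ← hswap]
        exact l2_opNorm_mul _ _

theorem IsHermitian.norm_mul_pow_le [Nonempty n] (hP : P.IsHermitian) (hQ : Q.IsHermitian)
    (m : ℕ) : ‖P * Q‖ ^ m ≤ ‖P ^ m * Q ^ m‖ := by
  simpa using pow_le_of_sq_le_mul (v := fun j ↦ ‖P ^ j * Q ^ j‖) (fun _ ↦ norm_nonneg _)
    (by simp) (hP.norm_pow_mul_pow_sq_le hQ) m

open scoped MatrixOrder in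
theorem PosSemidef.norm_mul_mul_pow_le [Nonempty n] {A T : Matrix n n ℝ} (hA : A.PosSemidef)
    (hT : T.IsHermitian) (m : ℕ) : ‖T * A * T‖ ^ m ≤ ‖T ^ m * A ^ m * T ^ m‖ := by
  set S := CFC.sqrt A
  have hS : S.IsHermitian := (CFC.sqrt_nonneg A).posSemidef.isHermitian
  have hgram : ∀ i, T ^ i * A ^ i * T ^ i = (S ^ i * T ^ i)ᴴ * (S ^ i * T ^ i) := fun i ↦ by
    rw [conjTranspose_mul, (hS.pow i).eq, (hT.pow i).eq, ← CFC.sqrt_mul_sqrt_self A hA.nonneg,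
      (Commute.refl S).mul_pow]
    simp only [mul_assoc]
  have h1 := hgram 1
  simp only [pow_one] at h1
  rw [h1, hgram, l2_opNorm_conjTranspose_mul_self, l2_opNorm_conjTranspose_mul_self, ← sq, ← sq,
    ← pow_mul, mul_comm, pow_mul]
  exact pow_le_pow_left₀ (by positivity) (hS.norm_mul_pow_le hT m) 2

end Norm

section CompoundNorm

variable {ι : Type*} [Fintype ι] [LinearOrder ι] {C : Matrix ι ι ℝ} {k : ℕ}

lemma IsHermitian.norm_compound (hC : C.IsHermitian) :
    ‖Matrix.compound k C‖ =
      ‖fun s : Set.powersetCard ι k ↦ ∏ a ∈ (s : Finset ι), hC.eigenvalues a‖ := by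
  conv_lhs => rw [hC.spectral_theorem, Unitary.conjStarAlgAut_apply]
  rw [map_mul, map_mul, compound_diagonal, star_eq_conjTranspose, compound_conjTranspose,
    ← star_eq_conjTranspose,
    norm_mul_diagonal_mul_star (compound_mem_unitaryGroup _ hC.eigenvectorUnitary.2)]
  simp

lemma IsHermitian.prod_eigenvalues_le_norm_compound (hC : C.IsHermitian)
    (s : Set.powersetCard ι k) :
    ∏ a ∈ (s : Finset ι), hC.eigenvalues a ≤ ‖Matrix.compound k C‖ := by
  rw [hC.norm_compound]
  exact (Real.le_norm_self _).trans
    (norm_le_pi_norm (fun s : Set.powersetCard ι k ↦ ∏ a ∈ (s : Finset ι), hC.eigenvalues a) s)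

lemma PosSemidef.exists_norm_compound_eq [Nonempty (Set.powersetCard ι k)] (hC : C.PosSemidef) :
    ∃ t : Set.powersetCard ι k,
      ‖Matrix.compound k C‖ = ∏ a ∈ (t : Finset ι), hC.isHermitian.eigenvalues a := by
  obtain ⟨t, ht⟩ := (IsGreatest.pi_norm
    fun s : Set.powersetCard ι k ↦ ∏ a ∈ (s : Finset ι), hC.isHermitian.eigenvalues a).1
  refine ⟨t, ?_⟩
  rw [hC.isHermitian.norm_compound, ← ht]
  exact Real.norm_of_nonneg (prod_nonneg fun a _ ↦ hC.eigenvalues_nonneg a)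

end CompoundNorm

theorem PosSemidef.trace_mul_mul_pow_le {ι : Type*} [Fintype ι] [LinearOrder ι]
    {A T : Matrix ι ι ℝ} (hA : A.PosSemidef) (hT : T.IsHermitian) (r : ℕ) :
    ((T * A * T) ^ r).trace ≤ (T ^ r * A ^ r * T ^ r).trace := by
  have hC : (T * A * T).PosSemidef := by
    have h := hA.mul_mul_conjTranspose_same T
    rwa [hT.eq] at h
  have hD : (T ^ r * A ^ r * T ^ r).PosSemidef := by
    have h := (hA.pow r).mul_mul_conjTranspose_same (T ^ r)
    rwa [(hT.pow r).eq] at h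
  rw [hC.isHermitian.trace_pow, hD.isHermitian.trace_eq_sum_eigenvalues]
  refine sum_le_sum_of_forall_prod_le (fun i ↦ pow_nonneg (hC.eigenvalues_nonneg i) r)
    hD.eigenvalues_nonneg fun s ↦ ?_
  have : Nonempty (Set.powersetCard ι #s) := ⟨⟨s, rfl⟩⟩
  obtain ⟨t, ht⟩ := hD.exists_norm_compound_eq (k := #s)
  refine ⟨t, t.2, ?_⟩
  calc ∏ i ∈ s, hC.isHermitian.eigenvalues i ^ r
      = (∏ i ∈ s, hC.isHermitian.eigenvalues i) ^ r := prod_pow _ _ _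
    _ ≤ ‖Matrix.compound #s (T * A * T)‖ ^ r := pow_le_pow_left₀
        (prod_nonneg fun i _ ↦ hC.eigenvalues_nonneg i)
        (hC.isHermitian.prod_eigenvalues_le_norm_compound ⟨s, rfl⟩) r
    _ ≤ ‖Matrix.compound #s (T ^ r * A ^ r * T ^ r)‖ := by
        simpa only [map_mul, map_pow] using (hA.compound _).norm_mul_mul_pow_le (hT.compound _) r
    _ = _ := ht

end Matrix

theorem lieb_thirring_general (n : ℕ) (A sqrtB : Matrix (Fin n) (Fin n) ℝ)
    (hA : A.PosSemidef) (hsqrt_psd : sqrtB.PosSemidef) (r : ℕ) :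
    ((sqrtB * A * sqrtB) ^ r).trace ≤ (sqrtB ^ r * A ^ r * sqrtB ^ r).trace :=
  hA.trace_mul_mul_pow_le hsqrt_psd.isHermitian r

/-- Lieb–Thirring inequality (trace form): for positive semidefinite real `n×n`
matrices `A`, `B` with `sqrtB` the PSD square root of `B`, and an integer `r ≥ 1`,
`Tr((B^(1/2) A B^(1/2))^r) ≤ Tr(B^(r/2) A^r B^(r/2))`, where `B^(r/2) = sqrtB^r`. -/
theorem lieb_thirring (n : ℕ) (A B sqrtB : Matrix (Fin n) (Fin n) ℝ)
    (hA : A.PosSemidef) (hB : B.PosSemidef)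
    (hsqrt_psd : sqrtB.PosSemidef) (hsqrt_sq : sqrtB ^ 2 = B)
    (r : ℕ) (hr : 1 ≤ r) :
    ((sqrtB * A * sqrtB) ^ r).trace ≤ (sqrtB ^ r * A ^ r * sqrtB ^ r).trace :=
  lieb_thirring_general n A sqrtB hA hsqrt_psd r
end

section
/- For a symmetric real n×n matrix B, a positive semidefinite real n×n matrix A, and α ∈ [0,1], one has Tr(A^α B A^{1-α} B) ≤ Tr(A B²). -/
/-!
In an orthonormal eigenbasis of `A`, with eigenvalues `dᵢ ≥ 0` and `C = U* B U` symmetric,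
`Tr(f(A) B g(A) B) = ∑ᵢⱼ f(dᵢ) g(dⱼ) Cᵢⱼ²`. Weighted AM-GM bounds `dᵢ^α dⱼ^(1-α)` by
`α dᵢ + (1-α) dⱼ`, and the symmetry of the weights `Cᵢⱼ²` makes the two resulting sums equal,
both to `∑ᵢⱼ dᵢ Cᵢⱼ² = Tr(A B²)`.
-/

open Matrix

theorem Matrix.trace_diagonal_mul_mul_diagonal_mul {n R : Type*} [Fintype n] [DecidableEq n]
    [CommSemiring R] (a b : n → R) (C : Matrix n n R) :
    (diagonal a * C * diagonal b * C).trace = ∑ i, ∑ j, a i * b j * (C i j * C j i) := by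
  simp only [trace, diag]
  simp only [mul_apply (M := diagonal a * C * diagonal b), mul_diagonal, diagonal_mul]
  refine Finset.sum_congr rfl fun i _ => Finset.sum_congr rfl fun j _ => ?_
  ring

namespace Matrix.IsHermitian

variable {n 𝕜 : Type*} [Fintype n] [DecidableEq n] [RCLike 𝕜] {A : Matrix n n 𝕜}
  (hA : A.IsHermitian)

theorem trace_cfc_mul_mul_cfc_mul (f g : ℝ → ℝ) (B : Matrix n n 𝕜) :
    let U : Matrix n n 𝕜 := hA.eigenvectorUnitary
    let C := star U * B * U
    (hA.cfc f * B * hA.cfc g * B).trace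
      = ∑ i, ∑ j, (f (hA.eigenvalues i) : 𝕜) * g (hA.eigenvalues j) * (C i j * C j i) := by
  intro U C
  have hUU : star U * U = 1 := Unitary.star_mul_self_of_mem hA.eigenvectorUnitary.2
  have hconj : hA.cfc f * B * hA.cfc g * B
      = U * (diagonal (RCLike.ofReal ∘ f ∘ hA.eigenvalues) * C *
          diagonal (RCLike.ofReal ∘ g ∘ hA.eigenvalues) * C) * star U := by
    simp only [IsHermitian.cfc, Unitary.conjStarAlgAut_apply, C, U, Matrix.mul_assoc,
      Unitary.mul_star_self_of_mem hA.eigenvectorUnitary.2, Matrix.mul_one]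
  rw [hconj, trace_mul_cycle, ← Matrix.mul_assoc, hUU, Matrix.one_mul,
    trace_diagonal_mul_mul_diagonal_mul]
  rfl

end Matrix.IsHermitian

theorem Real.sum_rpow_mul_rpow_mul_le_sum {ι : Type*} [Fintype ι] {d : ι → ℝ} (hd : ∀ i, 0 ≤ d i)
    {w : ι → ι → ℝ} (hw : ∀ i j, 0 ≤ w i j) (hw_symm : ∀ i j, w i j = w j i)
    {α : ℝ} (hα0 : 0 ≤ α) (hα1 : α ≤ 1) :
    ∑ i, ∑ j, d i ^ α * d j ^ (1 - α) * w i j ≤ ∑ i, ∑ j, d i * w i j := by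
  have hswap : ∑ i, ∑ j, d j * w i j = ∑ i, ∑ j, d i * w i j := by
    rw [Finset.sum_comm]
    simp only [hw_symm]
  calc ∑ i, ∑ j, d i ^ α * d j ^ (1 - α) * w i j
      ≤ ∑ i, ∑ j, (α * d i + (1 - α) * d j) * w i j := by
        gcongr with i _ j _
        · exact hw i j
        · exact geom_mean_le_arith_mean2_weighted hα0 (by linarith) (hd i) (hd j) (by ring)
    _ = α * ∑ i, ∑ j, d i * w i j + (1 - α) * ∑ i, ∑ j, d j * w i j := by
        simp only [Finset.mul_sum, ← Finset.sum_add_distrib, add_mul, mul_assoc]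
    _ = ∑ i, ∑ j, d i * w i j := by rw [hswap]; ring

/-- For a positive semidefinite real `n×n` matrix `A`, a symmetric matrix `B`, and
`α ∈ [0,1]`, `Tr(A^α B A^(1-α) B) ≤ Tr(A B²)`, where the matrix powers `A^α` and
`A^(1-α)` are defined via the functional calculus `x ↦ x^α` (real power) on `A`. -/
theorem trace_power_interpolation_lieb (n : ℕ) (A B : Matrix (Fin n) (Fin n) ℝ)
    (hA : A.PosSemidef) (hB : B.IsHermitian)
    (α : ℝ) (hα0 : 0 ≤ α) (hα1 : α ≤ 1) :
    ((hA.1.cfc fun x : ℝ => x ^ α) * B * (hA.1.cfc fun x : ℝ => x ^ (1 - α)) * B).trace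
      ≤ (A * B ^ 2).trace := by
  set U : Matrix (Fin n) (Fin n) ℝ := ↑hA.1.eigenvectorUnitary
  set C := star U * B * U
  have hC : C.IsHermitian := isHermitian_conjTranspose_mul_mul U hB
  have hC_symm (i j : Fin n) : C j i = C i j := by simpa using hC.apply i j
  have hA_id : hA.1.cfc id = A := (hA.1.cfc_eq id).symm.trans (cfc_id ℝ A hA.1)
  have hA_one : hA.1.cfc (fun _ => 1) = 1 := (hA.1.cfc_eq _).symm.trans (cfc_const_one ℝ A hA.1)
  calc _ = ∑ i, ∑ j, hA.1.eigenvalues i ^ α * hA.1.eigenvalues j ^ (1 - α) * (C i j * C j i) :=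
        hA.1.trace_cfc_mul_mul_cfc_mul _ _ B
    _ ≤ ∑ i, ∑ j, hA.1.eigenvalues i * (C i j * C j i) :=
        Real.sum_rpow_mul_rpow_mul_le_sum hA.eigenvalues_nonneg
          (fun i j => by rw [hC_symm]; exact mul_self_nonneg _)
          (fun i j => by rw [mul_comm]) hα0 hα1
    _ = (hA.1.cfc id * B * hA.1.cfc (fun _ => 1) * B).trace := by
        rw [hA.1.trace_cfc_mul_mul_cfc_mul]
        simp only [RCLike.ofReal_real_eq_id, id, mul_one]
        rfl
    _ = (A * B ^ 2).trace := by rw [hA_id, hA_one, Matrix.mul_one, sq, Matrix.mul_assoc]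
end

section
/- Tensor positivity: for any probability measure p on ℝⁿ with finite sixth moments and positive semidefinite symmetric matrices A₁, A₂, A₃, the tensor T_p(A₁,A₂,A₃) := E_{x,y∼p}[(xᵀA₁y)(xᵀA₂y)(xᵀA₃y)] (x, y independent) is nonnegative. -/
/-!
With `x⊗x⊗x` the vector of cubic monomials of `x`, the integrand is the bilinear form of the
Kronecker product `A₁ ⊗ₖ A₂ ⊗ₖ A₃` evaluated at `x⊗x⊗x` and `y⊗y⊗y`. Integrating out `y` and
then `x` turns `T_p(A₁,A₂,A₃)` into the quadratic form of this matrix at the third-moment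
tensor `E[x⊗x⊗x]`, and a Kronecker product of positive semidefinite matrices is positive
semidefinite.
-/

open MeasureTheory Matrix
open scoped Kronecker

section Kronecker

variable {R l m p q : Type*} [CommSemiring R] [Fintype l] [Fintype m] [Fintype p] [Fintype q]

theorem dotProduct_kronecker_mulVec (A : Matrix l m R) (B : Matrix p q R)
    (u : l → R) (u' : p → R) (v : m → R) (v' : q → R) :
    (fun i => u i.1 * u' i.2) ⬝ᵥ (A ⊗ₖ B) *ᵥ (fun j => v j.1 * v' j.2) =
      (u ⬝ᵥ A *ᵥ v) * (u' ⬝ᵥ B *ᵥ v') := by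
  simp only [dotProduct, mulVec, kroneckerMap_apply, Fintype.sum_prod_type]
  simp_rw [Fintype.sum_mul_sum, Finset.mul_sum, Finset.sum_mul]
  refine Fintype.sum_congr _ _ fun i => Fintype.sum_congr _ _ fun i' => ?_
  rw [Finset.sum_comm]
  refine Fintype.sum_congr _ _ fun j' => Fintype.sum_congr _ _ fun j => ?_
  ring

end Kronecker

section TensorCube

variable {ι : Type*} [Fintype ι]

def tensorCube {R : Type*} [Mul R] (x : ι → R) : (ι × ι) × ι → R :=
  fun i => x i.1.1 * x i.1.2 * x i.2

theorem tensorCube_dotProduct_kronecker_mulVec {R : Type*} [CommSemiring R]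
    (A₁ A₂ A₃ : Matrix ι ι R) (x y : ι → R) :
    tensorCube x ⬝ᵥ (A₁ ⊗ₖ A₂ ⊗ₖ A₃) *ᵥ tensorCube y =
      (x ⬝ᵥ A₁ *ᵥ y) * (x ⬝ᵥ A₂ *ᵥ y) * (x ⬝ᵥ A₃ *ᵥ y) := by
  rw [← dotProduct_kronecker_mulVec, ← dotProduct_kronecker_mulVec]
  rfl

theorem integrable_tensorCube_apply {μ : Measure (ι → ℝ)} [IsFiniteMeasure μ]
    (h : Integrable (fun x : ι → ℝ => ‖x‖ ^ 6) μ) (i : (ι × ι) × ι) :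
    Integrable (fun x => tensorCube x i) μ := by
  have h3 : Integrable (fun x : ι → ℝ => ‖x‖ ^ 3) μ :=
    integrable_norm_pow_of_le aestronglyMeasurable_id (by norm_num) h
  refine h3.mono' (by unfold tensorCube; fun_prop) (.of_forall fun x => ?_)
  simp only [tensorCube, norm_mul]
  calc ‖x i.1.1‖ * ‖x i.1.2‖ * ‖x i.2‖ ≤ ‖x‖ * ‖x‖ * ‖x‖ := by
        gcongr <;> exact norm_le_pi_norm x _
    _ = ‖x‖ ^ 3 := by ring

end TensorCube

section Integral

variable {α ι : Type*} [MeasurableSpace α] [Fintype ι] {μ : Measure α}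

theorem integral_dotProduct (v : ι → ℝ) {f : α → ι → ℝ} (hf : ∀ i, Integrable (f · i) μ) :
    ∫ a, v ⬝ᵥ f a ∂μ = v ⬝ᵥ fun i => ∫ a, f a i ∂μ := by
  simp only [dotProduct]
  rw [integral_finsetSum _ fun i _ => (hf i).const_mul (v i)]
  simp only [integral_const_mul]

theorem integral_integral_dotProduct_mulVec (K : Matrix ι ι ℝ) {f : α → ι → ℝ}
    (hf : ∀ i, Integrable (f · i) μ) :
    ∫ a, ∫ b, f a ⬝ᵥ K *ᵥ f b ∂μ ∂μ =
      (fun i => ∫ a, f a i ∂μ) ⬝ᵥ K *ᵥ fun i => ∫ a, f a i ∂μ := by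
  simp_rw [dotProduct_mulVec _ K, integral_dotProduct _ hf, ← dotProduct_mulVec,
    dotProduct_comm (f _), integral_dotProduct _ hf, dotProduct_comm]

end Integral

/-- Tensor positivity: for a probability measure `p` on `ℝⁿ` with finite sixth
moments and positive semidefinite symmetric matrices `A₁, A₂, A₃`, the tensor
`T_p(A₁,A₂,A₃) = E_{x,y∼p}[(xᵀA₁y)(xᵀA₂y)(xᵀA₃y)]` (with `x, y` independent)
is nonnegative. -/
theorem tensor_nonneg (n : ℕ) (p : Measure (Fin n → ℝ)) [IsProbabilityMeasure p]
    (hmom6 : Integrable (fun x : Fin n → ℝ => ‖x‖ ^ 6) p)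
    (A₁ A₂ A₃ : Matrix (Fin n) (Fin n) ℝ)
    (h₁ : A₁.PosSemidef) (h₂ : A₂.PosSemidef) (h₃ : A₃.PosSemidef) :
    0 ≤ ∫ x, ∫ y, (x ⬝ᵥ A₁ *ᵥ y) * (x ⬝ᵥ A₂ *ᵥ y) * (x ⬝ᵥ A₃ *ᵥ y) ∂p ∂p := by
  simp_rw [← tensorCube_dotProduct_kronecker_mulVec,
    integral_integral_dotProduct_mulVec _ (integrable_tensorCube_apply hmom6)]
  simpa using ((h₁.kronecker h₂).kronecker h₃).dotProduct_mulVec_nonneg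
    (fun i => ∫ x, tensorCube x i ∂p)
end

section
/- Tensor identity: for an isotropic probability measure p on ℝⁿ with finite sixth moments and symmetric matrices A, B, letting Δᵢ = E_{x∼p}[x xᵀ xᵢ], one has T_p(A,B,I) := E_{x,y∼p}[(xᵀAy)(xᵀBy)(xᵀy)] = Σᵢ Tr(A Δᵢ B Δᵢ), where x, y are independent. -/
/-!
Both integrals are taken against third moments. Integrating out `y` first turns
`(xᵀAy)(xᵀBy) = yᵀ (Aᵀx)(Bᵀx)ᵀ y` times `xᵀy = Σᵢ xᵢ yᵢ` into `Σᵢ xᵢ · xᵀ (A Δᵢ Bᵀ) x`;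
integrating out `x` then gives `Σᵢ Tr(A Δᵢ Bᵀ Δᵢᵀ)`, and `Bᵀ = B`, `Δᵢᵀ = Δᵢ`.
-/

open MeasureTheory Matrix

section QuadraticForms

variable {ι R : Type*} [Fintype ι] [CommSemiring R]

lemma dotProduct_mul_dotProduct (u v y : ι → R) :
    (u ⬝ᵥ y) * (v ⬝ᵥ y) = y ⬝ᵥ vecMulVec u v *ᵥ y := by
  rw [vecMulVec_mulVec, op_smul_eq_smul, dotProduct_smul, smul_eq_mul, dotProduct_comm y u,
    mul_comm]

lemma trace_vecMulVec_vecMul_mul_transpose (A B N : Matrix ι ι R) (x : ι → R) :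
    (vecMulVec (x ᵥ* A) (x ᵥ* B) * Nᵀ).trace = x ⬝ᵥ (A * N * Bᵀ) *ᵥ x := by
  rw [vecMulVec_mul, trace_vecMulVec, vecMul_transpose, ← dotProduct_mulVec, ← mulVec_transpose,
    mulVec_mulVec, mulVec_mulVec, Matrix.mul_assoc]

lemma dotProduct_mulVec_mul_apply (M : Matrix ι ι R) (x : ι → R) (i : ι) :
    (x ⬝ᵥ M *ᵥ x) * x i = ∑ j, ∑ k, M j k * (x j * x k * x i) := by
  simp only [dotProduct, mulVec, Finset.sum_mul, Finset.mul_sum]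
  exact Finset.sum_congr rfl fun j _ => Finset.sum_congr rfl fun k _ => by ring

end QuadraticForms

section ThirdMoments

variable {ι : Type*} [Fintype ι] {μ : Measure (ι → ℝ)}

lemma integrable_apply_mul_apply_mul_apply (h : Integrable (fun x : ι → ℝ => ‖x‖ ^ 3) μ)
    (a b c : ι) : Integrable (fun x : ι → ℝ => x a * x b * x c) μ := by
  refine h.mono' (by fun_prop) (ae_of_all _ fun x => ?_)
  have hx : ∀ j, ‖x j‖ ≤ ‖x‖ := fun j => norm_le_pi_norm x j
  calc ‖x a * x b * x c‖ = ‖x a‖ * ‖x b‖ * ‖x c‖ := by rw [norm_mul, norm_mul]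
    _ ≤ ‖x‖ * ‖x‖ * ‖x‖ := by gcongr <;> exact hx _
    _ = ‖x‖ ^ 3 := by ring

lemma integrable_dotProduct_mulVec_mul_apply
    (h3 : ∀ a b c : ι, Integrable (fun x : ι → ℝ => x a * x b * x c) μ)
    (M : Matrix ι ι ℝ) (i : ι) :
    Integrable (fun x : ι → ℝ => (x ⬝ᵥ M *ᵥ x) * x i) μ := by
  simp_rw [dotProduct_mulVec_mul_apply]
  exact integrable_finsetSum _ fun j _ => integrable_finsetSum _ fun k _ =>
    (h3 j k i).const_mul _

lemma integral_dotProduct_mulVec_mul_apply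
    (h3 : ∀ a b c : ι, Integrable (fun x : ι → ℝ => x a * x b * x c) μ) {Δ : ι → Matrix ι ι ℝ}
    (hΔ : ∀ i j k : ι, Δ i j k = ∫ x, x j * x k * x i ∂μ) (M : Matrix ι ι ℝ) (i : ι) :
    ∫ x, (x ⬝ᵥ M *ᵥ x) * x i ∂μ = (M * (Δ i)ᵀ).trace := by
  simp_rw [dotProduct_mulVec_mul_apply]
  rw [integral_finsetSum]
  · simp only [trace, diag_apply, mul_apply, transpose_apply]
    refine Finset.sum_congr rfl fun j _ => ?_
    rw [integral_finsetSum _ fun k _ => (h3 j k i).const_mul _]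
    simp_rw [integral_const_mul, hΔ]
  · exact fun j _ => integrable_finsetSum _ fun k _ => (h3 j k i).const_mul _

end ThirdMoments

theorem tensor_identity_general (n : ℕ) (p : Measure (Fin n → ℝ)) [IsProbabilityMeasure p]
    (hmom6 : Integrable (fun x : Fin n → ℝ => ‖x‖ ^ 6) p)
    (A B : Matrix (Fin n) (Fin n) ℝ) (hB : B.IsSymm)
    (Δ : Fin n → Matrix (Fin n) (Fin n) ℝ)
    (hΔ : ∀ i j k : Fin n, Δ i j k = ∫ x, x j * x k * x i ∂p) :
    ∫ x, ∫ y, (x ⬝ᵥ A *ᵥ y) * (x ⬝ᵥ B *ᵥ y) * (x ⬝ᵥ y) ∂p ∂p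
      = ∑ i : Fin n, (A * Δ i * B * Δ i).trace := by
  have h3 := integrable_apply_mul_apply_mul_apply
    (integrable_norm_pow_of_le (by fun_prop) (by norm_num) hmom6)
  have hΔT : ∀ i, (Δ i)ᵀ = Δ i := fun i => by
    ext j k
    rw [transpose_apply, hΔ, hΔ]
    congr 1 with x
    ring
  have hinner : ∀ x, ∫ y, (x ⬝ᵥ A *ᵥ y) * (x ⬝ᵥ B *ᵥ y) * (x ⬝ᵥ y) ∂p
      = ∑ i, (x ⬝ᵥ (A * Δ i * B) *ᵥ x) * x i := fun x => by
    have hexpand : ∀ y, (x ⬝ᵥ A *ᵥ y) * (x ⬝ᵥ B *ᵥ y) * (x ⬝ᵥ y)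
        = ∑ i, x i * ((y ⬝ᵥ vecMulVec (x ᵥ* A) (x ᵥ* B) *ᵥ y) * y i) := fun y => by
      rw [dotProduct_mulVec, dotProduct_mulVec, dotProduct_mul_dotProduct, dotProduct.eq_1 x y,
        Finset.mul_sum]
      exact Finset.sum_congr rfl fun i _ => by ring
    simp_rw [hexpand]
    rw [integral_finsetSum _ fun i _ =>
      (integrable_dotProduct_mulVec_mul_apply h3 _ i).const_mul _]
    refine Finset.sum_congr rfl fun i _ => ?_
    rw [integral_const_mul, integral_dotProduct_mulVec_mul_apply h3 hΔ,
      trace_vecMulVec_vecMul_mul_transpose, hB.eq, mul_comm]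
  calc ∫ x, ∫ y, (x ⬝ᵥ A *ᵥ y) * (x ⬝ᵥ B *ᵥ y) * (x ⬝ᵥ y) ∂p ∂p
      = ∑ i, ∫ x, (x ⬝ᵥ (A * Δ i * B) *ᵥ x) * x i ∂p := by
        simp_rw [hinner]
        exact integral_finsetSum _ fun i _ => integrable_dotProduct_mulVec_mul_apply h3 _ i
    _ = ∑ i, (A * Δ i * B * Δ i).trace := by
        simp_rw [integral_dotProduct_mulVec_mul_apply h3 hΔ, hΔT]

/-- Tensor identity: for a mean-zero probability measure `p` on `ℝⁿ` with finite
sixth moments, symmetric matrices `A, B`, and `Δᵢ = E_{x∼p}[x xᵀ xᵢ]`, one has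
`T_p(A,B,I) = E_{x,y∼p}[(xᵀAy)(xᵀBy)(xᵀy)] = Σᵢ Tr(A Δᵢ B Δᵢ)` with `x, y`
independent. -/
theorem tensor_identity (n : ℕ) (p : Measure (Fin n → ℝ)) [IsProbabilityMeasure p]
    (hmean : ∫ x, x ∂p = 0)
    (hmom6 : Integrable (fun x : Fin n → ℝ => ‖x‖ ^ 6) p)
    (A B : Matrix (Fin n) (Fin n) ℝ) (hA : A.IsSymm) (hB : B.IsSymm)
    (Δ : Fin n → Matrix (Fin n) (Fin n) ℝ)
    (hΔ : ∀ i j k : Fin n, Δ i j k = ∫ x, x j * x k * x i ∂p) :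
    ∫ x, ∫ y, (x ⬝ᵥ A *ᵥ y) * (x ⬝ᵥ B *ᵥ y) * (x ⬝ᵥ y) ∂p ∂p
      = ∑ i : Fin n, (A * Δ i * B * Δ i).trace :=
  tensor_identity_general n p hmom6 A B hB Δ hΔ
end

section
/- Tensor Hölder: for an isotropic probability measure p on ℝⁿ with finite moments of all needed orders, symmetric matrices A, B, and s, t ≥ 1 with 1/s + 1/t = 1, it holds that T_p(A,B,I) ≤ (T_p(|A|^s, I, I))^{1/s} · (T_p(|B|^t, I, I))^{1/t}, where T_p(A,B,C) = E_{x,y∼p}[(xᵀAy)(xᵀBy)(xᵀCy)] for independent x, y ∼ p. -/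
/-!
Write `Δₖ` for the matrix of third moments `E[xᵢ xⱼ xₖ]`. Integrating out `y` and then `x` gives
`T_p(M, N, I) = ∑ₖ tr(M Δₖ Nᵀ Δₖ)`. Diagonalising `A = U diag(λ) Uᵀ`, `B = V diag(μ) Vᵀ` and
setting `Wₖ = Uᵀ Δₖ V`, this is `∑_{k,a,b} λ_a μ_b (Wₖ)_{ab}²`, and since `I = U Uᵀ = V Vᵀ` the
two factors on the right are the same sums with `λ_a μ_b` replaced by `|λ_a|^s` and `|μ_b|^t`.
Hölder's inequality for sums with the nonnegative weights `(Wₖ)_{ab}²` concludes.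
-/

open MeasureTheory Matrix

theorem sum_mul_mul_le_weighted_Lp_mul_Lq {ι : Type*} (s : Finset ι) (f g w : ι → ℝ)
    (hw : ∀ i ∈ s, 0 ≤ w i) {p q : ℝ} (hpq : p.HolderConjugate q) :
    ∑ i ∈ s, f i * g i * w i
      ≤ (∑ i ∈ s, |f i| ^ p * w i) ^ (1 / p) * (∑ i ∈ s, |g i| ^ q * w i) ^ (1 / q) := by
  have hsplit : ∀ i ∈ s, f i * g i * w i = (f i * w i ^ (1 / p)) * (g i * w i ^ (1 / q)) :=
    fun i hi => by
      rw [mul_mul_mul_comm, ← Real.rpow_add' (hw i hi) (by simp [hpq.inv_add_inv_eq_one]),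
        one_div, one_div, hpq.inv_add_inv_eq_one, Real.rpow_one]
  have hpow : ∀ {r : ℝ}, 0 < r → ∀ (h : ι → ℝ), ∀ i ∈ s,
      |h i * w i ^ (1 / r)| ^ r = |h i| ^ r * w i := fun hr h i hi => by
    rw [abs_mul, abs_of_nonneg (Real.rpow_nonneg (hw i hi) _),
      Real.mul_rpow (abs_nonneg _) (Real.rpow_nonneg (hw i hi) _), ← Real.rpow_mul (hw i hi),
      one_div_mul_cancel hr.ne', Real.rpow_one]
  rw [Finset.sum_congr rfl hsplit, ← Finset.sum_congr rfl (hpow hpq.pos f),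
    ← Finset.sum_congr rfl (hpow hpq.symm.pos g)]
  exact Real.inner_le_Lp_mul_Lq s _ _ hpq

section Spectral

variable {ι : Type*} [Fintype ι] [DecidableEq ι]

theorem trace_diagonal_mul_mul_diagonal_mul_transpose (α β : ι → ℝ) (W : Matrix ι ι ℝ) :
    trace (diagonal α * W * diagonal β * Wᵀ) = ∑ a, ∑ b, α a * β b * W a b ^ 2 := by
  simp only [trace, diag_apply, mul_apply (M := diagonal α * W * diagonal β), mul_diagonal,
    diagonal_mul, transpose_apply]
  exact Finset.sum_congr rfl fun a _ => Finset.sum_congr rfl fun b _ => by ring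

theorem trace_conj_diagonal_mul_mul_conj_diagonal_mul (U V Δ : Matrix ι ι ℝ) (hΔ : Δᵀ = Δ)
    (α β : ι → ℝ) :
    trace (U * diagonal α * Uᵀ * Δ * (V * diagonal β * Vᵀ)ᵀ * Δ)
      = ∑ a, ∑ b, α a * β b * (Uᵀ * Δ * V) a b ^ 2 := by
  calc trace (U * diagonal α * Uᵀ * Δ * (V * diagonal β * Vᵀ)ᵀ * Δ)
      = trace (U * (diagonal α * Uᵀ * Δ * (V * diagonal β * Vᵀ)ᵀ * Δ)) := by
        simp only [Matrix.mul_assoc]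
    _ = trace (diagonal α * Uᵀ * Δ * (V * diagonal β * Vᵀ)ᵀ * Δ * U) := trace_mul_comm _ _
    _ = trace (diagonal α * (Uᵀ * Δ * V) * diagonal β * (Uᵀ * Δ * V)ᵀ) := by
        simp only [transpose_mul, transpose_transpose, diagonal_transpose, hΔ, Matrix.mul_assoc]
    _ = _ := trace_diagonal_mul_mul_diagonal_mul_transpose α β _

theorem Matrix.IsHermitian.cfc_eq_mul_diagonal_mul_transpose {A : Matrix ι ι ℝ}
    (hA : A.IsHermitian) (f : ℝ → ℝ) :
    hA.cfc f = (hA.eigenvectorUnitary : Matrix ι ι ℝ) * diagonal (f ∘ hA.eigenvalues)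
      * (hA.eigenvectorUnitary : Matrix ι ι ℝ)ᵀ := by
  simp [Matrix.IsHermitian.cfc, star_eq_conjTranspose]

theorem Matrix.IsHermitian.cfc_id_eq {A : Matrix ι ι ℝ} (hA : A.IsHermitian) : hA.cfc id = A := by
  rw [← hA.cfc_eq]
  exact cfc_id ℝ A hA

theorem Matrix.IsHermitian.cfc_one_eq {A : Matrix ι ι ℝ} (hA : A.IsHermitian) :
    hA.cfc (fun _ => 1) = 1 := by
  rw [← hA.cfc_eq]
  exact cfc_const_one ℝ A hA

end Spectral

section ThirdMoment

variable {ι : Type*}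

/-- The paper's `Δₖ`. -/
noncomputable def thirdMomentSlice (p : Measure (ι → ℝ)) (k : ι) : Matrix ι ι ℝ :=
  of fun i j => ∫ x, x i * x j * x k ∂p

theorem thirdMomentSlice_transpose (p : Measure (ι → ℝ)) (k : ι) :
    (thirdMomentSlice p k)ᵀ = thirdMomentSlice p k := by
  ext i j
  exact congrArg (integral p) (funext fun x => by ring)

variable [Fintype ι] {p : Measure (ι → ℝ)}

theorem integrable_mul_mul_of_integrable_norm_pow_three
    (h3 : Integrable (fun x : ι → ℝ => ‖x‖ ^ 3) p) (i j k : ι) :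
    Integrable (fun x : ι → ℝ => x i * x j * x k) p := by
  refine h3.mono' (by fun_prop) (ae_of_all _ fun x => ?_)
  have hi := norm_le_pi_norm x i
  have hj := norm_le_pi_norm x j
  have hk := norm_le_pi_norm x k
  calc ‖x i * x j * x k‖ = ‖x i‖ * ‖x j‖ * ‖x k‖ := by rw [norm_mul, norm_mul]
    _ ≤ ‖x‖ * ‖x‖ * ‖x‖ := by gcongr
    _ = ‖x‖ ^ 3 := by ring

theorem integral_cubic_eq_sum_thirdMomentSlice
    (hm : ∀ i j k : ι, Integrable (fun x : ι → ℝ => x i * x j * x k) p) (c : ι → ι → ι → ℝ) :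
    ∫ x, ∑ k, ∑ i, ∑ j, c k i j * (x i * x j * x k) ∂p
      = ∑ k, ∑ i, ∑ j, c k i j * thirdMomentSlice p k i j := by
  have hc : ∀ k i j, Integrable (fun x : ι → ℝ => c k i j * (x i * x j * x k)) p :=
    fun k i j => (hm i j k).const_mul _
  rw [integral_finsetSum _ fun k _ => integrable_finsetSum _ fun i _ =>
    integrable_finsetSum _ fun j _ => hc k i j]
  refine Finset.sum_congr rfl fun k _ => ?_
  rw [integral_finsetSum _ fun i _ => integrable_finsetSum _ fun j _ => hc k i j]
  refine Finset.sum_congr rfl fun i _ => ?_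
  rw [integral_finsetSum _ fun j _ => hc k i j]
  exact Finset.sum_congr rfl fun j _ => integral_const_mul _ _

theorem dotProduct_mul_dotProduct_mul_dotProduct (u v w y : ι → ℝ) :
    (u ⬝ᵥ y) * (v ⬝ᵥ y) * (w ⬝ᵥ y) = ∑ k, ∑ i, ∑ j, (w k * u i * v j) * (y i * y j * y k) := by
  simp only [dotProduct, Finset.sum_mul, Finset.mul_sum]
  refine Finset.sum_congr rfl fun k _ => ?_
  rw [Finset.sum_comm]
  exact Finset.sum_congr rfl fun i _ => Finset.sum_congr rfl fun j _ => by ring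

theorem integral_dotProduct_mul_dotProduct_mul_dotProduct
    (hm : ∀ i j k : ι, Integrable (fun x : ι → ℝ => x i * x j * x k) p) (u v w : ι → ℝ) :
    ∫ y, (u ⬝ᵥ y) * (v ⬝ᵥ y) * (w ⬝ᵥ y) ∂p = ∑ k, w k * (u ⬝ᵥ thirdMomentSlice p k *ᵥ v) := by
  simp only [dotProduct_mul_dotProduct_mul_dotProduct]
  rw [integral_cubic_eq_sum_thirdMomentSlice hm]
  simp only [dotProduct, mulVec, Finset.mul_sum]
  exact Finset.sum_congr rfl fun k _ => Finset.sum_congr rfl fun i _ =>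
    Finset.sum_congr rfl fun j _ => by ring

theorem integral_sum_mul_dotProduct_mulVec
    (hm : ∀ i j k : ι, Integrable (fun x : ι → ℝ => x i * x j * x k) p) (C : ι → Matrix ι ι ℝ) :
    ∫ x, ∑ k, x k * (x ⬝ᵥ C k *ᵥ x) ∂p = ∑ k, trace (C k * thirdMomentSlice p k) := by
  have hexpand : ∀ x : ι → ℝ, ∑ k, x k * (x ⬝ᵥ C k *ᵥ x)
      = ∑ k, ∑ i, ∑ j, C k i j * (x i * x j * x k) := fun x => by
    simp only [dotProduct, mulVec, Finset.mul_sum]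
    exact Finset.sum_congr rfl fun k _ => Finset.sum_congr rfl fun i _ =>
      Finset.sum_congr rfl fun j _ => by ring
  simp only [hexpand]
  refine (integral_cubic_eq_sum_thirdMomentSlice hm fun k i j => C k i j).trans ?_
  simp only [trace, diag_apply, mul_apply]
  refine Finset.sum_congr rfl fun k _ => Finset.sum_congr rfl fun i _ =>
    Finset.sum_congr rfl fun j _ => ?_
  rw [← transpose_apply (thirdMomentSlice p k), thirdMomentSlice_transpose]

end ThirdMoment

section CubicMomentForm

variable {ι : Type*} [Fintype ι]

/-- The paper's `T_p(A, B, C)`. -/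
noncomputable def cubicMomentForm (p : Measure (ι → ℝ)) (A B C : Matrix ι ι ℝ) : ℝ :=
  ∫ x, ∫ y, (x ⬝ᵥ A *ᵥ y) * (x ⬝ᵥ B *ᵥ y) * (x ⬝ᵥ C *ᵥ y) ∂p ∂p

variable {p : Measure (ι → ℝ)}

theorem cubicMomentForm_comm (A B C : Matrix ι ι ℝ) :
    cubicMomentForm p A B C = cubicMomentForm p B A C := by
  simp only [cubicMomentForm, mul_comm (_ ⬝ᵥ A *ᵥ _)]

variable [DecidableEq ι]

theorem cubicMomentForm_one (A B : Matrix ι ι ℝ) :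
    cubicMomentForm p A B 1 = ∫ x, ∫ y, (x ⬝ᵥ A *ᵥ y) * (x ⬝ᵥ B *ᵥ y) * (x ⬝ᵥ y) ∂p ∂p := by
  simp only [cubicMomentForm, one_mulVec]

theorem cubicMomentForm_one_one (A : Matrix ι ι ℝ) :
    cubicMomentForm p A 1 1 = ∫ x, ∫ y, (x ⬝ᵥ A *ᵥ y) * (x ⬝ᵥ y) ^ 2 ∂p ∂p := by
  simp only [cubicMomentForm, one_mulVec, mul_assoc, sq]

theorem cubicMomentForm_eq_sum_trace
    (hm : ∀ i j k : ι, Integrable (fun x : ι → ℝ => x i * x j * x k) p) (M N : Matrix ι ι ℝ) :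
    cubicMomentForm p M N 1
      = ∑ k, trace (M * thirdMomentSlice p k * Nᵀ * thirdMomentSlice p k) := by
  have hinner : ∀ x : ι → ℝ, ∫ y, (x ⬝ᵥ M *ᵥ y) * (x ⬝ᵥ N *ᵥ y) * (x ⬝ᵥ y) ∂p
      = ∑ k, x k * (x ⬝ᵥ (M * thirdMomentSlice p k * Nᵀ) *ᵥ x) := fun x => by
    simp only [dotProduct_mulVec x M, dotProduct_mulVec x N,
      integral_dotProduct_mul_dotProduct_mul_dotProduct hm, ← mulVec_transpose N,
      dotProduct_mulVec, vecMul_vecMul, Matrix.mul_assoc]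
  simp only [cubicMomentForm_one, hinner, integral_sum_mul_dotProduct_mulVec hm]

theorem cubicMomentForm_cfc
    (hm : ∀ i j k : ι, Integrable (fun x : ι → ℝ => x i * x j * x k) p)
    {A B : Matrix ι ι ℝ} (hA : A.IsHermitian) (hB : B.IsHermitian) (f g : ℝ → ℝ) :
    cubicMomentForm p (hA.cfc f) (hB.cfc g) 1
      = ∑ k, ∑ a, ∑ b, f (hA.eigenvalues a) * g (hB.eigenvalues b)
          * ((hA.eigenvectorUnitary : Matrix ι ι ℝ)ᵀ * thirdMomentSlice p k
              * hB.eigenvectorUnitary) a b ^ 2 := by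
  simp only [cubicMomentForm_eq_sum_trace hm, hA.cfc_eq_mul_diagonal_mul_transpose,
    hB.cfc_eq_mul_diagonal_mul_transpose,
    trace_conj_diagonal_mul_mul_conj_diagonal_mul _ _ _ (thirdMomentSlice_transpose p _),
    Function.comp_apply]

end CubicMomentForm

theorem tensor_holder_general (n : ℕ) (p : Measure (Fin n → ℝ))
    (hmom : ∀ k : ℕ, Integrable (fun x : Fin n → ℝ => ‖x‖ ^ k) p)
    (A B : Matrix (Fin n) (Fin n) ℝ) (hA : A.IsHermitian) (hB : B.IsHermitian)
    (s t : ℝ) (hs : 1 ≤ s) (ht : 1 ≤ t) (hst : 1 / s + 1 / t = 1) :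
    ∫ x, ∫ y, (x ⬝ᵥ A *ᵥ y) * (x ⬝ᵥ B *ᵥ y) * (x ⬝ᵥ y) ∂p ∂p
      ≤ (∫ x, ∫ y, (x ⬝ᵥ (hA.cfc fun u : ℝ => |u| ^ s) *ᵥ y) * (x ⬝ᵥ y) ^ 2 ∂p ∂p) ^ (1 / s) *
        (∫ x, ∫ y, (x ⬝ᵥ (hB.cfc fun u : ℝ => |u| ^ t) *ᵥ y) * (x ⬝ᵥ y) ^ 2 ∂p ∂p) ^ (1 / t) := by
  have hm := integrable_mul_mul_of_integrable_norm_pow_three (hmom 3)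
  have hst' : s.HolderConjugate t :=
    ⟨by simpa only [one_div, inv_one] using hst, by linarith, by linarith⟩
  have hAB := cubicMomentForm_cfc hm hA hB id id
  have hAs := cubicMomentForm_cfc hm hA hB (fun u => |u| ^ s) fun _ => 1
  have hBt := cubicMomentForm_cfc hm hA hB (fun _ => 1) fun u => |u| ^ t
  rw [hA.cfc_id_eq, hB.cfc_id_eq] at hAB
  rw [hB.cfc_one_eq] at hAs
  rw [hA.cfc_one_eq, cubicMomentForm_comm] at hBt
  simp only [id, mul_one, one_mul] at hAB hAs hBt
  rw [← cubicMomentForm_one, ← cubicMomentForm_one_one, ← cubicMomentForm_one_one, hAB, hAs, hBt]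
  simpa only [Fintype.sum_prod_type] using sum_mul_mul_le_weighted_Lp_mul_Lq Finset.univ
    (fun q : Fin n × Fin n × Fin n => hA.eigenvalues q.2.1) (fun q => hB.eigenvalues q.2.2)
    (fun q => ((hA.eigenvectorUnitary : Matrix (Fin n) (Fin n) ℝ)ᵀ * thirdMomentSlice p q.1
      * hB.eigenvectorUnitary) q.2.1 q.2.2 ^ 2) (fun q _ => sq_nonneg _) hst'

/-- Tensor Hölder: for a mean-zero probability measure `p` on `ℝⁿ` with finite
moments, symmetric matrices `A, B`, and `s, t ≥ 1` with `1/s + 1/t = 1`,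
`T_p(A,B,I) ≤ (T_p(|A|^s,I,I))^(1/s) · (T_p(|B|^t,I,I))^(1/t)`, where
`T_p(A,B,C) = E_{x,y∼p}[(xᵀAy)(xᵀBy)(xᵀCy)]` for independent `x, y ∼ p` and
`|A|^s` is defined via the functional calculus `x ↦ |x|^s` applied to `A`. -/
theorem tensor_holder (n : ℕ) (p : Measure (Fin n → ℝ)) [IsProbabilityMeasure p]
    (hmean : ∫ x, x ∂p = 0)
    (hmom : ∀ k : ℕ, Integrable (fun x : Fin n → ℝ => ‖x‖ ^ k) p)
    (A B : Matrix (Fin n) (Fin n) ℝ) (hA : A.IsHermitian) (hB : B.IsHermitian)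
    (s t : ℝ) (hs : 1 ≤ s) (ht : 1 ≤ t) (hst : 1 / s + 1 / t = 1) :
    ∫ x, ∫ y, (x ⬝ᵥ A *ᵥ y) * (x ⬝ᵥ B *ᵥ y) * (x ⬝ᵥ y) ∂p ∂p
      ≤ (∫ x, ∫ y, (x ⬝ᵥ (hA.cfc fun u : ℝ => |u| ^ s) *ᵥ y) * (x ⬝ᵥ y) ^ 2 ∂p ∂p) ^ (1 / s) *
        (∫ x, ∫ y, (x ⬝ᵥ (hB.cfc fun u : ℝ => |u| ^ t) *ᵥ y) * (x ⬝ᵥ y) ^ 2 ∂p ∂p) ^ (1 / t) :=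
  tensor_holder_general n p hmom A B hA hB s t hs ht hst
end
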